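/- arXiv:math/0606141 — 2 statements merged into one kernel-verified Lean document; each statement's English description precedes it below -/
import Mathlib

section
/- Let a, b be integers with b ≠ 0 and let λ = a/b. Then for every (z, w₁, w₂) ∈ M_λ with w₁ ≠ 0 and w₂ ≠ 0, one has w₁^a·conj(w₂^b) = conj(w₁^a)·w₂^b (integer powers); that is, the meromorphic function w₁^a/w₂^b is real-valued on M_λ, so for rational λ the submanifold M_λ carries a nonconstant meromorphic function real-valued on it. -/
/-! On `M_λ` conjugation multiplies `w₁` by `u = e^{i|z|²}` and `w₂` by `u^λ`. For `λ = a/b`,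
conjugation therefore multiplies both `w₁^a` and `w₂^b` by the same factor `u^a`, so their
ratio is real. -/

open Complex

/-- The submanifold `M_λ ⊆ ℂ³` defined by `conj w₁ = e^{i z conj z} w₁` and
`conj w₂ = e^{i λ z conj z} w₂`. -/
def Mlam (lam : ℝ) : Set (ℂ × ℂ × ℂ) :=
  {p | (starRingEnd ℂ) p.2.1 = Complex.exp (Complex.I * p.1 * (starRingEnd ℂ) p.1) * p.2.1 ∧
       (starRingEnd ℂ) p.2.2 =
         Complex.exp (Complex.I * (lam : ℂ) * p.1 * (starRingEnd ℂ) p.1) * p.2.2}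

lemma conj_zpow_of_conj_eq_mul {w c : ℂ} (h : starRingEnd ℂ w = c * w) (n : ℤ) :
    starRingEnd ℂ (w ^ n) = c ^ n * w ^ n := by
  rw [map_zpow₀, h, mul_zpow]

lemma exp_mul_zpow_of_mul_eq {a b : ℤ} {μ : ℂ} (h : b * μ = a) (x : ℂ) :
    exp (μ * x) ^ b = exp x ^ a := by
  rw [← exp_int_mul, ← exp_int_mul, ← mul_assoc, h]

lemma zpow_mul_conj_zpow_eq_of_conj_eq_mul {w₁ w₂ c₁ c₂ : ℂ} {a b : ℤ}
    (h₁ : starRingEnd ℂ w₁ = c₁ * w₁) (h₂ : starRingEnd ℂ w₂ = c₂ * w₂) (hc : c₂ ^ b = c₁ ^ a) :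
    w₁ ^ a * starRingEnd ℂ (w₂ ^ b) = starRingEnd ℂ (w₁ ^ a) * w₂ ^ b := by
  rw [conj_zpow_of_conj_eq_mul h₁, conj_zpow_of_conj_eq_mul h₂, hc]
  ring

theorem stmt5_general (a b : ℤ) (hb : b ≠ 0) (lam : ℝ) (hlam : lam = (a : ℝ) / (b : ℝ))
    (z w₁ w₂ : ℂ) (h : (z, w₁, w₂) ∈ Mlam lam) :
    w₁ ^ a * (starRingEnd ℂ) (w₂ ^ b) = (starRingEnd ℂ) (w₁ ^ a) * w₂ ^ b := by
  obtain ⟨h₁, h₂⟩ := h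
  have hba : (b : ℂ) * lam = a := by
    have : (b : ℂ) ≠ 0 := Int.cast_ne_zero.mpr hb
    push_cast [hlam]
    field_simp
  refine zpow_mul_conj_zpow_eq_of_conj_eq_mul h₁ h₂ ?_
  rw [← exp_mul_zpow_of_mul_eq hba]
  congr 2
  ring

/-- If `λ = a/b` is rational, then on `M_λ` (where `w₁ ≠ 0 ≠ w₂`)
one has `w₁^a · conj (w₂^b) = conj (w₁^a) · w₂^b`, i.e. the meromorphic function
`w₁^a / w₂^b` is real-valued on `M_λ`. -/
theorem stmt5 (a b : ℤ) (hb : b ≠ 0) (lam : ℝ) (hlam : lam = (a : ℝ) / (b : ℝ))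
    (z w₁ w₂ : ℂ) (h : (z, w₁, w₂) ∈ Mlam lam) (hw₁ : w₁ ≠ 0) (hw₂ : w₂ ≠ 0) :
    w₁ ^ a * (starRingEnd ℂ) (w₂ ^ b) = (starRingEnd ℂ) (w₁ ^ a) * w₂ ^ b :=
  stmt5_general a b hb lam hlam z w₁ w₂ h
end

section
/- Let r, m ≥ 1 be integers and let c > 0, δ > 0. Let X₁, …, X_m : ℝʳ → ℝʳ be C^∞ maps whose restrictions to the closed ball {x ∈ ℝʳ : |x| ≤ c} are linearly independent over ℝ, i.e., if a ∈ ℝᵐ and Σ_{j=1}^m a_j·X_j(x) = 0 for all |x| ≤ c, then a = 0. Let φ : ℝ × ℝʳ × ℝᵐ → ℝʳ be C^∞ on an open set containing D := {(t, x, y) : |t| ≤ 2, |x| ≤ c, |y| ≤ δ} and satisfy, for all (t, x, y) ∈ D, ∂φ/∂t(t, x, y) = Σ_{j=1}^m y_j·X_j(φ(t, x, y)) and φ(0, x, y) = x. Define the time-one map F(x, y) := φ(1, x, y). Then there exists γ with 0 < γ < δ such that for all y¹, y² ∈ ℝᵐ with |y¹| ≤ γ and |y²| ≤ γ: if F(x,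 y¹) = F(x, y²) for all |x| ≤ c, then y¹ = y². -/
/-!
Write `a = y¹ - y²` and `Φ(z) a = ∑ aⱼ Xⱼ(z)`. All trajectories stay in the compact set `φ(D)`,
on which `Φ` is bounded and Lipschitz. Grönwall's inequality bounds `φ(t,x,y¹) - φ(t,x,y²)` by
`O(|a|)`, and feeding this back into the equation gives
`φ(1,x,y¹) - φ(1,x,y²) = Φ(x) a + O(γ |a|)` uniformly in `|x| ≤ c`. Linear independence on the
compact ball makes `a ↦ sup_{|x| ≤ c} |Φ(x) a|` a norm, so `|a| ≤ κ sup_x |Φ(x) a|`. If the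
time-one maps agree, then `|a| ≤ κ · O(γ) · |a|`, which forces `a = 0` once `γ` is small.
-/

open Set Metric Real Filter
open scoped NNReal

section LinearCombination

variable {ι E : Type*} [Fintype ι] [NormedAddCommGroup E] [NormedSpace ℝ E]

noncomputable def linearCombinationCLM (v : ι → E) : EuclideanSpace ℝ ι →L[ℝ] E :=
  ∑ j, (EuclideanSpace.proj j).smulRight (v j)

@[simp]
theorem linearCombinationCLM_apply (v : ι → E) (a : EuclideanSpace ℝ ι) :
    linearCombinationCLM v a = ∑ j, a j • v j := by
  simp [linearCombinationCLM]

theorem contDiff_linearCombinationCLM {F : Type*} [NormedAddCommGroup F] [NormedSpace ℝ F]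
    {n : WithTop ℕ∞} {X : ι → F → E} (hX : ∀ j, ContDiff ℝ n (X j)) :
    ContDiff ℝ n fun z => linearCombinationCLM fun j => X j z :=
  ContDiff.sum fun j _ => contDiff_const.smulRight (hX j)

end LinearCombination

theorem gronwallBound_zero_le {K ε x : ℝ} (hK : 0 ≤ K) (hε : 0 ≤ ε) :
    gronwallBound 0 K ε x ≤ ε * x * exp (K * x) := by
  rcases hK.eq_or_lt with rfl | hK
  · simp [gronwallBound_K0]
  simp only [gronwallBound_of_K_ne_0 hK.ne', zero_mul, zero_add]
  rw [div_mul_eq_mul_div, div_le_iff₀ hK]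
  have h1 := add_one_le_exp (-(K * x))
  have h2 : exp (-(K * x)) * exp (K * x) = 1 := by rw [← exp_add]; simp
  have h3 : exp (K * x) - 1 ≤ K * x * exp (K * x) := by
    nlinarith [mul_le_mul_of_nonneg_right h1 (exp_pos (K * x)).le]
  nlinarith [mul_le_mul_of_nonneg_left h3 hε]

section Trajectories

variable {E P : Type*} [NormedAddCommGroup E] [NormedSpace ℝ E] [NormedAddCommGroup P]
  [NormedSpace ℝ P] {Φ : E → P →L[ℝ] E} {B : Set E} {A : ℝ} {L : ℝ≥0}

theorem norm_sub_initial_le_of_hasDerivAt {u : ℝ → E} {y : P} (hA : ∀ z ∈ B, ‖Φ z‖ ≤ A)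
    (hu : ∀ t ∈ Icc (0 : ℝ) 1, HasDerivAt u (Φ (u t) y) t) (huB : ∀ t ∈ Icc (0 : ℝ) 1, u t ∈ B)
    {t : ℝ} (ht : t ∈ Icc (0 : ℝ) 1) : ‖u t - u 0‖ ≤ A * ‖y‖ * t := by
  simpa using norm_image_sub_le_of_norm_deriv_le_segment' (fun s hs => (hu s hs).hasDerivWithinAt)
    (fun s hs => (Φ (u s)).le_of_opNorm_le (hA _ (huB s (Ico_subset_Icc_self hs))) y) t ht

theorem norm_sub_le_of_hasDerivAt_of_initial_eq {u₁ u₂ : ℝ → E} {y₁ y₂ : P}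
    (hA : ∀ z ∈ B, ‖Φ z‖ ≤ A) (hL : LipschitzOnWith L Φ B)
    (hu₁ : ∀ t ∈ Icc (0 : ℝ) 1, HasDerivAt u₁ (Φ (u₁ t) y₁) t)
    (hu₁B : ∀ t ∈ Icc (0 : ℝ) 1, u₁ t ∈ B)
    (hu₂ : ∀ t ∈ Icc (0 : ℝ) 1, HasDerivAt u₂ (Φ (u₂ t) y₂) t)
    (hu₂B : ∀ t ∈ Icc (0 : ℝ) 1, u₂ t ∈ B)
    (h0 : u₁ 0 = u₂ 0) {t : ℝ} (ht : t ∈ Icc (0 : ℝ) 1) :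
    ‖u₁ t - u₂ t‖ ≤ A * ‖y₁ - y₂‖ * exp (L * ‖y₂‖) := by
  have hA0 : 0 ≤ A := (norm_nonneg _).trans (hA _ (hu₁B 0 (left_mem_Icc.2 zero_le_one)))
  have hLip : LipschitzOnWith (L * ‖y₂‖₊) (fun z => Φ z y₂) B :=
    LipschitzOnWith.of_dist_le_mul fun z₁ hz₁ z₂ hz₂ => by
      rw [dist_eq_norm, ← sub_apply]
      calc ‖(Φ z₁ - Φ z₂) y₂‖ ≤ ‖Φ z₁ - Φ z₂‖ * ‖y₂‖ := (Φ z₁ - Φ z₂).le_opNorm y₂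
        _ ≤ L * dist z₁ z₂ * ‖y₂‖ := by
          gcongr; rw [← dist_eq_norm]; exact hL.dist_le_mul _ hz₁ _ hz₂
        _ = (L * ‖y₂‖₊ : ℝ≥0) * dist z₁ z₂ := by push_cast; ring
  have hIco : Ico (0 : ℝ) 1 ⊆ Icc 0 1 := Ico_subset_Icc_self
  have := dist_le_of_approx_trajectories_ODE_of_mem (v := fun _ z => Φ z y₂) (s := fun _ => B)
    (δ := 0) (εf := A * ‖y₁ - y₂‖) (εg := 0) (fun _ _ => hLip)
    (fun s hs => (hu₁ s hs).continuousAt.continuousWithinAt)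
    (fun s hs => (hu₁ s (hIco hs)).hasDerivWithinAt)
    (fun s hs => by
      rw [dist_eq_norm, ← map_sub]
      exact (Φ (u₁ s)).le_of_opNorm_le (hA _ (hu₁B s (hIco hs))) _)
    (fun s hs => hu₁B s (hIco hs))
    (fun s hs => (hu₂ s hs).continuousAt.continuousWithinAt)
    (fun s hs => (hu₂ s (hIco hs)).hasDerivWithinAt)
    (fun s hs => by simp) (fun s hs => hu₂B s (hIco hs)) (by simp [h0]) t ht
  rw [dist_eq_norm, add_zero, sub_zero, NNReal.coe_mul, coe_nnnorm] at this
  calc ‖u₁ t - u₂ t‖ ≤ A * ‖y₁ - y₂‖ * t * exp (L * ‖y₂‖ * t) :=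
        this.trans (gronwallBound_zero_le (by positivity) (by positivity))
    _ ≤ A * ‖y₁ - y₂‖ * 1 * exp (L * ‖y₂‖ * 1) := by
        gcongr <;> exact ht.2
    _ = A * ‖y₁ - y₂‖ * exp (L * ‖y₂‖) := by simp

theorem norm_sub_sub_apply_sub_le_of_hasDerivAt {u₁ u₂ : ℝ → E} {y₁ y₂ : P} {γ : ℝ}
    (hA : ∀ z ∈ B, ‖Φ z‖ ≤ A) (hL : LipschitzOnWith L Φ B)
    (hu₁ : ∀ t ∈ Icc (0 : ℝ) 1, HasDerivAt u₁ (Φ (u₁ t) y₁) t)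
    (hu₁B : ∀ t ∈ Icc (0 : ℝ) 1, u₁ t ∈ B)
    (hu₂ : ∀ t ∈ Icc (0 : ℝ) 1, HasDerivAt u₂ (Φ (u₂ t) y₂) t)
    (hu₂B : ∀ t ∈ Icc (0 : ℝ) 1, u₂ t ∈ B)
    (h0 : u₁ 0 = u₂ 0) (hy₁ : ‖y₁‖ ≤ γ) (hy₂ : ‖y₂‖ ≤ γ) :
    ‖u₁ 1 - u₂ 1 - Φ (u₁ 0) (y₁ - y₂)‖ ≤ L * A * (1 + exp (L * γ)) * γ * ‖y₁ - y₂‖ := by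
  set x := u₁ 0 with hx
  set a := y₁ - y₂
  have hA0 : 0 ≤ A := (norm_nonneg _).trans (hA _ (hu₁B 0 (left_mem_Icc.2 zero_le_one)))
  have hγ : 0 ≤ γ := (norm_nonneg _).trans hy₁
  have hG : ∀ t ∈ Icc (0 : ℝ) 1, HasDerivAt (fun s => u₁ s - u₂ s - s • Φ x a)
      ((Φ (u₁ t) - Φ x) a + (Φ (u₁ t) - Φ (u₂ t)) y₂) t := by
    intro t ht
    refine (((hu₁ t ht).sub (hu₂ t ht)).sub ((hasDerivAt_id' t).smul_const (Φ x a))).congr_deriv ?_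
    simp only [sub_apply, map_sub, one_smul, a]
    abel
  have hG' : ∀ t ∈ Ico (0 : ℝ) 1,
      ‖(Φ (u₁ t) - Φ x) a + (Φ (u₁ t) - Φ (u₂ t)) y₂‖ ≤ L * A * (1 + exp (L * γ)) * γ * ‖a‖ := by
    intro t ht
    replace ht := Ico_subset_Icc_self ht
    have hdisp : ‖u₁ t - x‖ ≤ A * γ := by
      calc ‖u₁ t - x‖ ≤ A * ‖y₁‖ * t := norm_sub_initial_le_of_hasDerivAt hA hu₁ hu₁B ht
        _ ≤ A * γ * 1 := by gcongr; exacts [ht.1, ht.2]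
        _ = A * γ := mul_one _
    have hdiff : ‖u₁ t - u₂ t‖ ≤ A * ‖a‖ * exp (L * γ) := by
      calc ‖u₁ t - u₂ t‖ ≤ A * ‖a‖ * exp (L * ‖y₂‖) :=
            norm_sub_le_of_hasDerivAt_of_initial_eq hA hL hu₁ hu₁B hu₂ hu₂B h0 ht
        _ ≤ A * ‖a‖ * exp (L * γ) := by gcongr
    have hlip : ∀ z₁ ∈ B, ∀ z₂ ∈ B, ‖Φ z₁ - Φ z₂‖ ≤ L * ‖z₁ - z₂‖ := fun z₁ hz₁ z₂ hz₂ => by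
      simpa only [dist_eq_norm] using hL.dist_le_mul z₁ hz₁ z₂ hz₂
    have hxB : x ∈ B := hu₁B 0 (left_mem_Icc.2 zero_le_one)
    calc ‖(Φ (u₁ t) - Φ x) a + (Φ (u₁ t) - Φ (u₂ t)) y₂‖
        ≤ ‖Φ (u₁ t) - Φ x‖ * ‖a‖ + ‖Φ (u₁ t) - Φ (u₂ t)‖ * ‖y₂‖ :=
          (norm_add_le _ _).trans (add_le_add ((Φ (u₁ t) - Φ x).le_opNorm a)
            ((Φ (u₁ t) - Φ (u₂ t)).le_opNorm y₂))
      _ ≤ L * (A * γ) * ‖a‖ + L * (A * ‖a‖ * exp (L * γ)) * γ := by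
          gcongr
          · exact (hlip _ (hu₁B t ht) _ hxB).trans (by gcongr)
          · exact (hlip _ (hu₁B t ht) _ (hu₂B t ht)).trans (by gcongr)
      _ = L * A * (1 + exp (L * γ)) * γ * ‖a‖ := by ring
  have := norm_image_sub_le_of_norm_deriv_le_segment' (fun s hs => (hG s hs).hasDerivWithinAt) hG'
    1 (right_mem_Icc.2 zero_le_one)
  simpa [← h0, ← hx] using this

end Trajectories

theorem exists_norm_le_mul_of_forall_norm_apply_le {α E P : Type*} [TopologicalSpace α]
    [NormedAddCommGroup E] [NormedSpace ℝ E] [NormedAddCommGroup P] [NormedSpace ℝ P]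
    [FiniteDimensional ℝ P] {s : Set α} (hs : IsCompact s) {Ψ : α → P →L[ℝ] E}
    (hΨ : ContinuousOn Ψ s) (hinj : ∀ a, (∀ x ∈ s, Ψ x a = 0) → a = 0) :
    ∃ κ : ℝ, ∀ a b, 0 ≤ b → (∀ x ∈ s, ‖Ψ x a‖ ≤ b) → ‖a‖ ≤ κ * b := by
  have : CompactSpace s := isCompact_iff_compactSpace.mp hs
  let T : P →ₗ[ℝ] C(s, E) :=
    { toFun := fun a => ⟨fun x => Ψ x a, hΨ.domRestrict.clm_apply continuous_const⟩
      map_add' := fun a b => by ext; exact map_add (Ψ _) a b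
      map_smul' := fun c a => by ext; exact map_smul (Ψ _) c a }
  obtain ⟨κ, -, hκ⟩ := T.exists_antilipschitzWith <|
    LinearMap.ker_eq_bot'.2 fun a ha => hinj a fun x hx => congr($ha ⟨x, hx⟩)
  refine ⟨κ, fun a b hb hab => ?_⟩
  calc ‖a‖ ≤ κ * ‖T a‖ := by simpa using hκ.le_mul_dist a 0
    _ ≤ κ * b := by gcongr; exact (ContinuousMap.norm_le _ hb).2 fun x => hab x x.2

theorem exists_mem_Ioo_lt_of_continuousAt {f : ℝ → ℝ} {δ b : ℝ} (hδ : 0 < δ)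
    (hf : ContinuousAt f 0) (hb : f 0 < b) : ∃ γ ∈ Ioo 0 δ, f γ < b :=
  ((eventually_mem_set.2 (Ioo_mem_nhdsGT hδ)).and
    ((hf.eventually (gt_mem_nhds hb)).filter_mono nhdsWithin_le_nhds)).exists

theorem stmt12_general (r m : ℕ) (c δ : ℝ) (hδ : 0 < δ)
    (X : Fin m → EuclideanSpace ℝ (Fin r) → EuclideanSpace ℝ (Fin r))
    (hXsmooth : ∀ j, ContDiff ℝ (⊤ : ℕ∞) (X j))
    (hXindep : ∀ a : Fin m → ℝ,
      (∀ x : EuclideanSpace ℝ (Fin r), ‖x‖ ≤ c → ∑ j : Fin m, a j • X j x = 0) → a = 0)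
    (φ : ℝ × EuclideanSpace ℝ (Fin r) × EuclideanSpace ℝ (Fin m) →
      EuclideanSpace ℝ (Fin r))
    (Ω : Set (ℝ × EuclideanSpace ℝ (Fin r) × EuclideanSpace ℝ (Fin m)))
    (hΩD : {q : ℝ × EuclideanSpace ℝ (Fin r) × EuclideanSpace ℝ (Fin m) |
      |q.1| ≤ 2 ∧ ‖q.2.1‖ ≤ c ∧ ‖q.2.2‖ ≤ δ} ⊆ Ω)
    (hφsmooth : ContDiffOn ℝ (⊤ : ℕ∞) φ Ω)
    (hφode : ∀ (t : ℝ) (x : EuclideanSpace ℝ (Fin r)) (y : EuclideanSpace ℝ (Fin m)),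
      |t| ≤ 2 → ‖x‖ ≤ c → ‖y‖ ≤ δ →
      HasDerivAt (fun s : ℝ => φ (s, x, y)) (∑ j : Fin m, y j • X j (φ (t, x, y))) t)
    (hφ0 : ∀ (x : EuclideanSpace ℝ (Fin r)) (y : EuclideanSpace ℝ (Fin m)),
      ‖x‖ ≤ c → ‖y‖ ≤ δ → φ (0, x, y) = x) :
    ∃ γ : ℝ, 0 < γ ∧ γ < δ ∧
      ∀ y₁ y₂ : EuclideanSpace ℝ (Fin m), ‖y₁‖ ≤ γ → ‖y₂‖ ≤ γ →
        (∀ x : EuclideanSpace ℝ (Fin r), ‖x‖ ≤ c → φ (1, x, y₁) = φ (1, x, y₂)) →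
        y₁ = y₂ := by
  set Φ := fun z => linearCombinationCLM fun j => X j z
  have hΦ : ContDiff ℝ 1 Φ := contDiff_linearCombinationCLM fun j => (hXsmooth j).of_le (by simp)
  set D := Icc (-2 : ℝ) 2 ×ˢ closedBall (0 : EuclideanSpace ℝ (Fin r)) c ×ˢ
    closedBall (0 : EuclideanSpace ℝ (Fin m)) δ
  have hDΩ : D ⊆ Ω := fun q hq => hΩD (by simpa [D, abs_le] using hq)
  have hD : IsCompact D :=
    isCompact_Icc.prod ((isCompact_closedBall _ _).prod (isCompact_closedBall _ _))
  have hB : IsCompact (φ '' D) := hD.image_of_continuousOn (hφsmooth.continuousOn.mono hDΩ)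
  obtain ⟨A, hA0, hA⟩ :=
    (hB.image_of_continuousOn hΦ.continuous.continuousOn).isBounded.exists_pos_norm_le
  obtain ⟨L, hL⟩ := hΦ.locallyLipschitz.locallyLipschitzOn.exists_lipschitzOnWith_of_compact hB
  obtain ⟨κ, hκ⟩ := exists_norm_le_mul_of_forall_norm_apply_le (isCompact_closedBall 0 c)
    hΦ.continuous.continuousOn fun a ha => WithLp.ofLp_injective 2 <|
      hXindep a.ofLp fun x hx => by simpa [Φ] using ha x (mem_closedBall_zero_iff.2 hx)
  obtain ⟨γ, ⟨hγ0, hγδ⟩, hγκ⟩ := exists_mem_Ioo_lt_of_continuousAt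
    (f := fun γ => κ * (L * A * (1 + exp (L * γ)) * γ)) (b := 1) hδ (by fun_prop) (by simp)
  refine ⟨γ, hγ0, hγδ, fun y₁ y₂ hy₁ hy₂ hF => sub_eq_zero.mp (norm_eq_zero.mp ?_)⟩
  have htraj : ∀ x y, ‖x‖ ≤ c → ‖y‖ ≤ γ →
      (∀ t ∈ Icc (0 : ℝ) 1, HasDerivAt (fun s => φ (s, x, y)) (Φ (φ (t, x, y)) y) t) ∧
      ∀ t ∈ Icc (0 : ℝ) 1, φ (t, x, y) ∈ φ '' D := by
    intro x y hx hy
    have ht2 : ∀ t ∈ Icc (0 : ℝ) 1, |t| ≤ 2 := fun t ht =>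
      abs_le.2 ⟨by linarith [ht.1], by linarith [ht.2]⟩
    refine ⟨fun t ht => by simpa [Φ] using hφode t x y (ht2 t ht) hx (hy.trans hγδ.le),
      fun t ht => mem_image_of_mem φ ?_⟩
    simpa [D] using ⟨abs_le.1 (ht2 t ht), hx, hy.trans hγδ.le⟩
  have hsmall : ∀ x ∈ closedBall 0 c,
      ‖Φ x (y₁ - y₂)‖ ≤ L * A * (1 + exp (L * γ)) * γ * ‖y₁ - y₂‖ := by
    intro x hx
    rw [mem_closedBall_zero_iff] at hx
    obtain ⟨hu₁, hu₁B⟩ := htraj x y₁ hx hy₁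
    obtain ⟨hu₂, hu₂B⟩ := htraj x y₂ hx hy₂
    have := norm_sub_sub_apply_sub_le_of_hasDerivAt (fun z hz => hA _ (mem_image_of_mem Φ hz)) hL
      hu₁ hu₁B hu₂ hu₂B (by rw [hφ0 x y₁ hx (hy₁.trans hγδ.le), hφ0 x y₂ hx (hy₂.trans hγδ.le)])
      hy₁ hy₂
    rwa [hF x hx, hφ0 x y₁ hx (hy₁.trans hγδ.le), sub_self, zero_sub, norm_neg] at this
  have := hκ (y₁ - y₂) _ (by positivity) hsmall
  nlinarith [norm_nonneg (y₁ - y₂)]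

/-- **flow lemma.** Let `X₁,…,X_m : ℝʳ → ℝʳ` be smooth vector fields that are
linearly independent on the ball `{|x| ≤ c}`, and let `φ(t,x,y)` be the flow of
`y₁X₁ + ⋯ + y_mX_m`, smooth on an open set containing
`D = {|t| ≤ 2, |x| ≤ c, |y| ≤ δ}`.  For the time-one map `F(x,y) = φ(1,x,y)` there exists
`0 < γ < δ` such that if `|y¹|, |y²| ≤ γ` and `F(·,y¹) ≡ F(·,y²)` on `{|x| ≤ c}`,
then `y¹ = y²`. -/
theorem stmt12 (r m : ℕ) (hr : 1 ≤ r) (hm : 1 ≤ m) (c δ : ℝ) (hc : 0 < c) (hδ : 0 < δ)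
    (X : Fin m → EuclideanSpace ℝ (Fin r) → EuclideanSpace ℝ (Fin r))
    (hXsmooth : ∀ j, ContDiff ℝ (⊤ : ℕ∞) (X j))
    (hXindep : ∀ a : Fin m → ℝ,
      (∀ x : EuclideanSpace ℝ (Fin r), ‖x‖ ≤ c → ∑ j : Fin m, a j • X j x = 0) → a = 0)
    (φ : ℝ × EuclideanSpace ℝ (Fin r) × EuclideanSpace ℝ (Fin m) →
      EuclideanSpace ℝ (Fin r))
    (Ω : Set (ℝ × EuclideanSpace ℝ (Fin r) × EuclideanSpace ℝ (Fin m)))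
    (hΩopen : IsOpen Ω)
    (hΩD : {q : ℝ × EuclideanSpace ℝ (Fin r) × EuclideanSpace ℝ (Fin m) |
      |q.1| ≤ 2 ∧ ‖q.2.1‖ ≤ c ∧ ‖q.2.2‖ ≤ δ} ⊆ Ω)
    (hφsmooth : ContDiffOn ℝ (⊤ : ℕ∞) φ Ω)
    (hφode : ∀ (t : ℝ) (x : EuclideanSpace ℝ (Fin r)) (y : EuclideanSpace ℝ (Fin m)),
      |t| ≤ 2 → ‖x‖ ≤ c → ‖y‖ ≤ δ →
      HasDerivAt (fun s : ℝ => φ (s, x, y)) (∑ j : Fin m, y j • X j (φ (t, x, y))) t)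
    (hφ0 : ∀ (x : EuclideanSpace ℝ (Fin r)) (y : EuclideanSpace ℝ (Fin m)),
      ‖x‖ ≤ c → ‖y‖ ≤ δ → φ (0, x, y) = x) :
    ∃ γ : ℝ, 0 < γ ∧ γ < δ ∧
      ∀ y₁ y₂ : EuclideanSpace ℝ (Fin m), ‖y₁‖ ≤ γ → ‖y₂‖ ≤ γ →
        (∀ x : EuclideanSpace ℝ (Fin r), ‖x‖ ≤ c → φ (1, x, y₁) = φ (1, x, y₂)) →
        y₁ = y₂ :=
  stmt12_general r m c δ hδ X hXsmooth hXindep φ Ω hΩD hφsmooth hφode hφ0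
end
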